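/- arXiv:2303.03440 — 10 statements merged into one kernel-verified Lean document; each statement's English description precedes it below -/
import Mathlib

section
/- Let C be a category with a terminal object ⊤, equipped with a comonad (T, ε, δ), let D be the co-Kleisli category of T, and let J : C → D be the canonical identity-on-objects functor induced by the comonadic adjunction (⊤ is also a terminal object of D). If the underlying endofunctor of T has a bifree algebra, then D has exactly one fixpoint operator uniform with respect to J: such an operator exists, and any two fixpoint operators on D uniform with respect to J are equal (i.e. they assign the same morphism ⊤ ⟶ A to every endomorphism of every object A of D). -/
open CategoryTheory CategoryTheory.Limits

/-- A bifree algebra for an endofunctor `T : C ⥤ C`: an algebra `(V, a)` that is initial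
among `T`-algebras, whose structure map `a` is an isomorphism, and such that the coalgebra
`(V, a⁻¹)` is terminal among `T`-coalgebras. -/
def IsBifreeAlgebra {C : Type*} [Category C] (T : C ⥤ C) (V : C) (a : T.obj V ⟶ V) : Prop :=
  Nonempty (IsInitial (Endofunctor.Algebra.mk V a : Endofunctor.Algebra T)) ∧
  ∃ hiso : IsIso a,
    Nonempty (IsTerminal
      (Endofunctor.Coalgebra.mk V (@inv _ _ _ _ a hiso) : Endofunctor.Coalgebra T))

/-!
A point `⊤ ⟶ A` of the co-Kleisli category is a map `x : T ⊤ ⟶ A` of `C`, and `x` is a fixpoint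
of `f : T A ⟶ A` exactly when `x = δ ≫ T x ≫ f`, i.e. when `x` is a hylomorphism from the
coalgebra `(T ⊤, δ)` to the algebra `(A, f)`. Through a bifree algebra `(V, a)` there is a
canonical one: unfold `T ⊤` into `V`, then fold `V` into `A`. Folds commute with algebra
morphisms, which are exactly the maps along which uniformity is required, so this operator is
uniform. Conversely, a fixpoint of `a` is a coalgebra morphism into the terminal coalgebra
`(V, a⁻¹)`, hence is the unfold, and uniformity along the fold `V ⟶ A` then determines every
other fixpoint.
-/

namespace CategoryTheory

namespace Endofunctor

variable {C : Type*} [Category C] {F : C ⥤ C}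

def IsHylo (X : Coalgebra F) (A : Algebra F) (x : X.V ⟶ A.a) : Prop :=
  X.str ≫ F.map x ≫ A.str = x

lemma isHylo_comp {X : Coalgebra F} {V : C} {a : F.obj V ⟶ V} [IsIso a] {A : Algebra F}
    (k : X ⟶ Coalgebra.mk V (inv a)) (h : Algebra.mk V a ⟶ A) : IsHylo X A (k.f ≫ h.f) := by
  have hk : X.str ≫ F.map k.f = k.f ≫ inv a := k.h
  have hh : F.map h.f ≫ A.str = a ≫ h.f := h.h
  unfold IsHylo
  rw [F.map_comp, Category.assoc, hh, reassoc_of% hk, IsIso.inv_hom_id_assoc]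

lemma IsHylo.eq_from {V : C} {a : F.obj V ⟶ V} [IsIso a]
    (hV : IsTerminal (Coalgebra.mk V (inv a))) {X : Coalgebra F} {x : X.V ⟶ V}
    (hx : IsHylo X (Algebra.mk V a) x) : x = (hV.from X).f := by
  have hcoalg : X.str ≫ F.map x = x ≫ inv a := by
    rw [IsIso.eq_comp_inv, Category.assoc]
    exact hx
  exact congrArg Coalgebra.Hom.f (hV.hom_ext (Coalgebra.Hom.mk x hcoalg) _)

end Endofunctor

namespace Cokleisli

variable {C : Type*} [Category C] {T : Comonad C}

lemma comp_toCokleisli_map_of {X Y : Cokleisli T} {Z : C} (f : X ⟶ Y) (s : Y.of ⟶ Z) :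
    (f ≫ (Adjunction.toCokleisli T).map s).of = f.of ≫ s := by
  change T.δ.app X.of ≫ (T : C ⥤ C).map f.of ≫ T.ε.app Y.of ≫ s = f.of ≫ s
  rw [← Category.assoc ((T : C ⥤ C).map f.of), T.ε.naturality]
  simp

lemma toCokleisli_map_comp_of {X : C} {Y Z : Cokleisli T} (s : X ⟶ Y.of) (g : Y ⟶ Z) :
    ((Adjunction.toCokleisli T).map s ≫ g).of = (T : C ⥤ C).map s ≫ g.of := by
  change T.δ.app X ≫ (T : C ⥤ C).map (T.ε.app X ≫ s) ≫ g.of = (T : C ⥤ C).map s ≫ g.of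
  simp

lemma comp_eq_self_iff_isHylo {X A : Cokleisli T} (x : X ⟶ A) (f : A ⟶ A) :
    x ≫ f = x ↔
      Endofunctor.IsHylo (Endofunctor.Coalgebra.mk ((T : C ⥤ C).obj X.of) (T.δ.app X.of))
        (Endofunctor.Algebra.mk A.of f.of) x.of :=
  ⟨congrArg Hom.of, hom_ext _⟩

lemma comp_toCokleisli_map_eq_iff {A B : Cokleisli T} (s : A.of ⟶ B.of) (f : A ⟶ A)
    (g : B ⟶ B) :
    f ≫ (Adjunction.toCokleisli T).map s = (Adjunction.toCokleisli T).map s ≫ g ↔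
      (T : C ⥤ C).map s ≫ g.of = f.of ≫ s := by
  rw [eq_comm (a := _ ≫ g.of), ← comp_toCokleisli_map_of, ← toCokleisli_map_comp_of]
  exact ⟨congrArg Hom.of, hom_ext _⟩

end Cokleisli

end CategoryTheory

/-- Plotkin–Simpson, part 1: if the underlying endofunctor of a comonad `T` on a category `C`
with a terminal object has a bifree algebra, then the co-Kleisli category of `T` has exactly
one fixpoint operator uniform with respect to the canonical functor `J : C → Cokleisli T`. -/
theorem unique_uniform_fixpoint_of_bifree
    {C : Type*} [Category C] [HasTerminal C] (T : Comonad C)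
    (V : C) (a : (T : C ⥤ C).obj V ⟶ V)
    (hbifree : IsBifreeAlgebra (T : C ⥤ C) V a) :
    ∃! fix : ∀ A : Cokleisli T, (A ⟶ A) → ((Cokleisli.mk T (⊤_ C)) ⟶ A),
      (∀ (A : Cokleisli T) (f : A ⟶ A), fix A f ≫ f = fix A f) ∧
      (∀ (A B : Cokleisli T) (s : A.of ⟶ B.of)
        (f : A ⟶ A) (g : B ⟶ B),
        f ≫ (Cokleisli.Adjunction.toCokleisli T).map s =
          (Cokleisli.Adjunction.toCokleisli T).map s ≫ g →
        fix A f ≫ (Cokleisli.Adjunction.toCokleisli T).map s = fix B g) := by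
  obtain ⟨⟨hinit⟩, hiso, ⟨hterm⟩⟩ := hbifree
  let unfold := hterm.from
    (Endofunctor.Coalgebra.mk ((T : C ⥤ C).obj (⊤_ C)) (T.δ.app (⊤_ C)))
  let fold (A : Cokleisli T) (f : A ⟶ A) := hinit.to (Endofunctor.Algebra.mk A.of f.of)
  refine ⟨fun A f => ⟨unfold.f ≫ (fold A f).f⟩, ⟨fun A f => ?_, fun A B s f g hsq => ?_⟩,
    fun fix ⟨hfix, hunif⟩ => ?_⟩
  · exact (Cokleisli.comp_eq_self_iff_isHylo _ f).2 (Endofunctor.isHylo_comp unfold (fold A f))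
  · let s' : Endofunctor.Algebra.mk A.of f.of ⟶ Endofunctor.Algebra.mk B.of g.of :=
      ⟨s, (Cokleisli.comp_toCokleisli_map_eq_iff s f g).1 hsq⟩
    apply Cokleisli.hom_ext _
    rw [Cokleisli.comp_toCokleisli_map_of]
    change (unfold.f ≫ (fold A f).f) ≫ s'.f = unfold.f ≫ (fold B g).f
    rw [Category.assoc, ← Endofunctor.Algebra.comp_f, hinit.to_comp]
  · funext A f
    let a' : Cokleisli.mk T V ⟶ Cokleisli.mk T V := ⟨a⟩
    have hfix_a : (fix _ a').of = unfold.f :=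
      ((Cokleisli.comp_eq_self_iff_isHylo _ a').1 (hfix _ a')).eq_from hterm
    have hunif_fold := hunif _ A (fold A f).f a' f
      ((Cokleisli.comp_toCokleisli_map_eq_iff _ a' f).2 (fold A f).h)
    apply Cokleisli.hom_ext _
    rw [← hunif_fold, Cokleisli.comp_toCokleisli_map_of, hfix_a]
end

section
/- Let B be a bicategory, F : B ⥤ B a pseudofunctor, Φ an object of B, and R : F.obj Φ ⟶ Φ a 1-cell which is a pseudo-initial F-algebra, i.e.: (existence) for every object A and every 1-cell f : F.obj A ⟶ A there exist a 1-cell u : Φ ⟶ A and an invertible 2-cell μ : R ≫ u ≅ F.map u ≫ f; and (uniqueness) for all A, f and any two such pairs (v, ν : R ≫ v ≅ F.map v ≫ f) and (w, ω : R ≫ w ≅ F.map w ≫ f), there is a unique invertible 2-cell φ : v ≅ w satisfying the compatibility (R ◁ φ.hom) ≫ ω.hom = ν.hom ≫ (F.map₂ φ.hom ▷ f). Then R is part of an adjoint equivalence: there exist a 1-cell L : Φ ⟶ F.obj Φ, an invertible unit 2-cell η : 𝟙_Φ ≅ L ≫ R and an invertible counit 2-cell ε : R ≫ L ≅ 𝟙_{F.obj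 Φ} satisfying the triangle identities (so L ⊣ R is an adjunction in B whose unit and counit are invertible). -/
open CategoryTheory CategoryTheory.Bicategory

/-- Pseudo-Lambek lemma: a pseudo-initial algebra structure 1-cell `R : F.obj Φ ⟶ Φ` for a
pseudofunctor `F : B ⥤ B` is part of an adjoint equivalence, i.e. it admits a left adjoint
`L : Φ ⟶ F.obj Φ` with invertible unit and counit. -/
theorem pseudoInitialAlgebra_adjointEquivalence
    {B : Type*} [Bicategory B] (F : Pseudofunctor B B) (Φ : B) (R : F.obj Φ ⟶ Φ)
    (hex : ∀ (A : B) (f : F.obj A ⟶ A),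
      ∃ (u : Φ ⟶ A), Nonempty (R ≫ u ≅ F.map u ≫ f))
    (huniq : ∀ (A : B) (f : F.obj A ⟶ A) (v w : Φ ⟶ A)
      (ν : R ≫ v ≅ F.map v ≫ f) (ω : R ≫ w ≅ F.map w ≫ f),
      ∃! φ : v ≅ w, (R ◁ φ.hom) ≫ ω.hom = ν.hom ≫ (F.map₂ φ.hom ▷ f)) :
    ∃ (L : Φ ⟶ F.obj Φ) (adj : Bicategory.Adjunction L R),
      IsIso adj.unit ∧ IsIso adj.counit := by
  -- Apply existence to the algebra `(F.obj Φ, F.map R)` to get `L` and `μ`.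
  obtain ⟨L, ⟨μ⟩⟩ := hex (F.obj Φ) (F.map R)
  -- `L ≫ R` is an algebra morphism from `(Φ, R)` to itself.
  let ν : R ≫ (L ≫ R) ≅ F.map (L ≫ R) ≫ R :=
    (α_ R L R).symm ≪≫ whiskerRightIso μ R ≪≫ α_ (F.map L) (F.map R) R ≪≫
      whiskerLeftIso (F.map L) (Iso.refl (F.map R ≫ R)) ≪≫
      (α_ (F.map L) (F.map R) R).symm ≪≫ whiskerRightIso (F.mapComp L R).symm R
  -- `𝟙 Φ` is also an algebra morphism from `(Φ, R)` to itself.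
  let ω : R ≫ 𝟙 Φ ≅ F.map (𝟙 Φ) ≫ R :=
    ρ_ R ≪≫ (λ_ R).symm ≪≫ whiskerRightIso (F.mapId Φ).symm R
  -- By uniqueness, get an iso `φ : L ≫ R ≅ 𝟙 Φ`.
  obtain ⟨φ, -, -⟩ := huniq Φ R (L ≫ R) (𝟙 Φ) ν ω
  -- Unit and counit candidates.
  let η : 𝟙 Φ ≅ L ≫ R := φ.symm
  let ε' : R ≫ L ≅ 𝟙 (F.obj Φ) :=
    μ ≪≫ (F.mapComp L R).symm ≪≫ F.map₂Iso φ ≪≫ F.mapId Φ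
  -- Upgrade to an adjoint equivalence.
  let e : Bicategory.Equivalence Φ (F.obj Φ) :=
    Bicategory.Equivalence.mkOfAdjointifyCounit η ε'
  have hhom : e.hom = L := rfl
  have hinv : e.inv = R := rfl
  refine ⟨L, ⟨e.unit.hom, e.counit.hom, e.left_triangle_hom, e.right_triangle_hom⟩, ?_, ?_⟩ <;>
    dsimp <;> exact Iso.isIso_hom _
end

section
/- Let F : A ⥤ B and G : B ⥤ A be functors between categories. If the algebra (X, a : G.obj (F.obj X) ⟶ X) is an initial object of the category of algebras for the endofunctor F ⋙ G of A, then the algebra (F.obj X, F.map a : F.obj (G.obj (F.obj X)) ⟶ F.obj X) is an initial object of the category of algebras for the endofunctor G ⋙ F of B. -/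
/-!
The functor `(X, a) ↦ (F X, F a)` from `F ⋙ G`-algebras to `G ⋙ F`-algebras has a partner
`(Y, b) ↦ (G Y, G b)` in the other direction. If the structure map of `I = (X, a)` has a section
`s` that is an algebra morphism (for initial `I`, the inverse of `a`), then every morphism
`m : (F X, F a) ⟶ Y` satisfies `m = F (s ≫ G m) ≫ b`, so it is determined by an algebra morphism
out of `I`. Initiality of `I` therefore gives uniqueness, and the same formula with the unique
morphism `I ⟶ (G Y, G b)` gives existence.
-/

open CategoryTheory CategoryTheory.Limits

namespace CategoryTheory.Endofunctor.Algebra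

variable {A B : Type*} [Category A] [Category B]

@[simps]
def strHom {T : A ⥤ A} (Y : Algebra T) : (⟨T.obj Y.a, T.map Y.str⟩ : Algebra T) ⟶ Y :=
  ⟨Y.str, rfl⟩

abbrev roll (F : A ⥤ B) (G : B ⥤ A) : Algebra (F ⋙ G) ⥤ Algebra (G ⋙ F) where
  obj X := ⟨F.obj X.a, F.map X.str⟩
  map f := ⟨F.map f.f, by simp only [Functor.comp_map, ← F.map_comp]; exact congrArg F.map f.h⟩

variable (F : A ⥤ B) (G : B ⥤ A)

theorem eq_roll_map_comp_strHom {I : Algebra (F ⋙ G)} (s : I ⟶ (roll G F).obj ((roll F G).obj I))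
    (hs : s.f ≫ I.str = 𝟙 I.a) {Y : Algebra (G ⋙ F)} (m : (roll F G).obj I ⟶ Y) :
    m = (roll F G).map (s ≫ (roll G F).map m) ≫ strHom Y := by
  ext
  have hm : F.map (G.map m.f) ≫ Y.str = F.map I.str ≫ m.f := m.h
  simp only [comp_f, strHom_f]
  rw [F.map_comp, Category.assoc, hm, ← Category.assoc, ← F.map_comp, hs, F.map_id,
    Category.id_comp]

def isInitialRollObj {I : Algebra (F ⋙ G)} (h : IsInitial I) : IsInitial ((roll F G).obj I) :=
  IsInitial.ofUniqueHom (fun Y => (roll F G).map (h.to ((roll G F).obj Y)) ≫ strHom Y)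
    fun Y m => by
      rw [eq_roll_map_comp_strHom F G (h.to _) (Initial.left_inv h) m, h.hom_ext (h.to _ ≫ _)]

end CategoryTheory.Endofunctor.Algebra

/-- Rolling property of initial algebras: if `(X, a)` is an initial algebra for `F ⋙ G`,
then `(F.obj X, F.map a)` is an initial algebra for `G ⋙ F`. -/
theorem initialAlgebra_roll
    {A : Type*} {B : Type*} [Category A] [Category B]
    (F : A ⥤ B) (G : B ⥤ A) (X : A) (a : (F ⋙ G).obj X ⟶ X)
    (h : IsInitial (Endofunctor.Algebra.mk X a : Endofunctor.Algebra (F ⋙ G))) :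
    Nonempty (IsInitial
      (Endofunctor.Algebra.mk (F.obj X) (F.map a) : Endofunctor.Algebra (G ⋙ F))) :=
  ⟨Endofunctor.Algebra.isInitialRollObj F G h⟩
end

section
/- Let F : A ⥤ B and G : B ⥤ A be functors between categories. If the coalgebra (X, c : X ⟶ G.obj (F.obj X)) is a terminal object of the category of coalgebras for the endofunctor F ⋙ G of A, then the coalgebra (F.obj X, F.map c : F.obj X ⟶ F.obj (G.obj (F.obj X))) is a terminal object of the category of coalgebras for the endofunctor G ⋙ F of B. -/
/-!
The structure maps `V.str : V ⟶ F (G V)` of `G ⋙ F`-coalgebras are natural in `V`. Hence every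
map `m : V ⟶ F(X, c)` equals `V.str ≫ F (G m ≫ c⁻¹)`, where `G m ≫ c⁻¹ : G V ⟶ (X, c)` is a map of
`F ⋙ G`-coalgebras and `c⁻¹` is Lambek's inverse of `c`. Terminality of `(X, c)` pins that map
down, hence `m`; and `V.str ≫ F (!)` is such a map.
-/

open CategoryTheory CategoryTheory.Limits

namespace CategoryTheory.Endofunctor.Coalgebra

variable {A B : Type*} [Category A] [Category B] (F : A ⥤ B) (G : B ⥤ A)

@[simps]
def roll : Coalgebra (F ⋙ G) ⥤ Coalgebra (G ⋙ F) where
  obj W := ⟨F.obj W.V, F.map W.str⟩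
  map m := ⟨F.map m.f, by rw [Functor.comp_map, ← F.map_comp, ← F.map_comp, ← m.h]; rfl⟩

@[simps]
def strNatTrans : 𝟭 (Coalgebra (G ⋙ F)) ⟶ roll G F ⋙ roll F G where
  app V := ⟨V.str, rfl⟩
  naturality _ _ m := Hom.ext m.h.symm

variable {F G}

lemma roll_map_strNatTrans_app (W : Coalgebra (F ⋙ G)) :
    (roll F G).map ((strNatTrans G F).app W) = (strNatTrans F G).app ((roll F G).obj W) :=
  rfl

lemma eq_strNatTrans_app_comp_roll_map {V : Coalgebra (G ⋙ F)} {W : Coalgebra (F ⋙ G)}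
    (hW : IsTerminal W) (m : V ⟶ (roll F G).obj W) :
    m = (strNatTrans F G).app V ≫ (roll F G).map ((roll G F).map m ≫ hW.from _) :=
  -- Lambek: `hW.from _` is a left inverse of the structure map of `W`.
  calc m = m ≫ (roll F G).map ((strNatTrans G F).app W ≫ hW.from _) := by
        rw [hW.hom_ext (_ ≫ _) (𝟙 W), Functor.map_id, Category.comp_id]
    _ = ((𝟭 _).map m ≫ (strNatTrans F G).app ((roll F G).obj W)) ≫
          (roll F G).map (hW.from _) := by
        rw [Functor.map_comp, roll_map_strNatTrans_app, Category.assoc]; rfl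
    _ = (strNatTrans F G).app V ≫ (roll F G).map ((roll G F).map m ≫ hW.from _) := by
        rw [NatTrans.naturality, Category.assoc, Functor.comp_map, Functor.map_comp]

end CategoryTheory.Endofunctor.Coalgebra

/-- Rolling property of final coalgebras: if `(X, c)` is a terminal coalgebra for `F ⋙ G`,
then `(F.obj X, F.map c)` is a terminal coalgebra for `G ⋙ F`. -/
theorem terminalCoalgebra_roll
    {A : Type*} {B : Type*} [Category A] [Category B]
    (F : A ⥤ B) (G : B ⥤ A) (X : A) (c : X ⟶ (F ⋙ G).obj X)
    (h : IsTerminal (Endofunctor.Coalgebra.mk X c : Endofunctor.Coalgebra (F ⋙ G))) :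
    Nonempty (IsTerminal
      (Endofunctor.Coalgebra.mk (F.obj X) (F.map c) : Endofunctor.Coalgebra (G ⋙ F))) :=
  ⟨IsTerminal.ofUniqueHom (Y := (Endofunctor.Coalgebra.roll F G).obj ⟨X, c⟩)
    (fun V => (Endofunctor.Coalgebra.strNatTrans F G).app V ≫
      (Endofunctor.Coalgebra.roll F G).map (h.from _))
    fun V m => by
      rw [Endofunctor.Coalgebra.eq_strNatTrans_app_comp_roll_map h m,
        h.hom_ext (_ ≫ _) (h.from _)]⟩
end

section
/- Let T : C ⥤ C be an endofunctor of a category C and assume that the composite endofunctor T ⋙ T has a bifree algebra. If (V, a : T.obj V ⟶ V) is a bifree T-algebra, then (V, T.map a ≫ a : T.obj (T.obj V) ⟶ V) is a bifree (T ⋙ T)-algebra: it is an initial (T ⋙ T)-algebra, its structure map T.map a ≫ a is an isomorphism, and the coalgebra (V, (T.map a ≫ a)⁻¹) is a terminal (T ⋙ T)-coalgebra. -/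
/-!
Freyd's squaring argument. Lambek's argument, run with the `T ⋙ T`-algebra `(T W, T b)` in
place of `(T (T W), T (T b))`, shows that the structure map `b` of an initial `T ⋙ T`-algebra
`(W, b)` has an invertible square root: a `T`-algebra `(W, γ)` with `T γ ≫ γ = b`. A bifree
`T`-algebra `(V, a)` maps to `(W, γ)` by initiality and receives a map from it by finality of
`(V, a⁻¹)`; the two composites are identities by initiality of `(V, a)` and, after squaring, of
`(W, b)`. Hence `(V, a) ≅ (W, γ)`, and squaring gives `(V, T a ≫ a) ≅ (W, b)`.
-/

open CategoryTheory CategoryTheory.Limits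

noncomputable section

namespace CategoryTheory.Endofunctor.Algebra

variable {C : Type*} [Category C] {T : C ⥤ C}

def square (A : Algebra T) : Algebra (T ⋙ T) := ⟨A.a, T.map A.str ≫ A.str⟩

variable (T) in
def squareFunctor : Algebra T ⥤ Algebra (T ⋙ T) where
  obj := square
  map f := ⟨f.f, by
    simp only [square, Functor.comp_map, ← Functor.map_comp_assoc, f.h]
    simp only [Functor.map_comp, Category.assoc, f.h]⟩

instance : (squareFunctor T).Faithful where
  map_injective h := by
    have := congrArg Hom.f h
    ext
    exact this

instance (A : Algebra T) [IsIso A.str] : IsIso A.square.str :=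
  inferInstanceAs (IsIso (T.map A.str ≫ A.str))

def invCoalgebra (A : Algebra T) [IsIso A.str] : Coalgebra T := ⟨A.a, inv A.str⟩

section Inverse

variable {A B : Algebra T} [IsIso A.str] [IsIso B.str]

theorem map_comp_str_eq_iff (f : A.a ⟶ B.a) :
    T.map f ≫ B.str = A.str ≫ f ↔ inv A.str ≫ T.map f = f ≫ inv B.str := by
  rw [← IsIso.inv_comp_eq, ← Category.assoc, ← IsIso.eq_comp_inv]

def homOfInvCoalgebraHom (f : A.invCoalgebra ⟶ B.invCoalgebra) : A ⟶ B :=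
  ⟨f.f, (map_comp_str_eq_iff f.f).2 f.h⟩

def invCoalgebraIso (e : A ≅ B) : A.invCoalgebra ≅ B.invCoalgebra :=
  Coalgebra.isoMk ((forget T).mapIso e) ((map_comp_str_eq_iff e.hom.f).1 e.hom.h)

def isoOfIsInitialSquare (hA : IsInitial A) (hA' : IsTerminal A.invCoalgebra)
    (hB : IsInitial B.square) : A ≅ B where
  hom := hA.to B
  inv := homOfInvCoalgebraHom (hA'.from B.invCoalgebra)
  hom_inv_id := hA.hom_ext _ _
  inv_hom_id := (squareFunctor T).map_injective (hB.hom_ext _ _)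

end Inverse

namespace Initial

variable {A : Algebra (T ⋙ T)} (h : IsInitial A)

def sqrtStrInv : A.a ⟶ T.obj A.a :=
  (h.to ⟨T.obj A.a, T.map A.str⟩).f

theorem map_map_sqrtStrInv_comp : T.map (T.map (sqrtStrInv h)) ≫ T.map A.str =
    A.str ≫ sqrtStrInv h :=
  (h.to ⟨T.obj A.a, T.map A.str⟩).h

def sqrtStr : T.obj A.a ⟶ A.a :=
  T.map (sqrtStrInv h) ≫ A.str

theorem sqrtStrInv_comp_sqrtStr : sqrtStrInv h ≫ sqrtStr h = 𝟙 A.a := by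
  have hT : T.map (T.map (T.map (sqrtStrInv h))) ≫ T.map (T.map A.str) =
      T.map A.str ≫ T.map (sqrtStrInv h) := by
    simpa only [Functor.map_comp] using congrArg T.map (map_map_sqrtStrInv_comp h)
  let γ : (⟨T.obj A.a, T.map A.str⟩ : Algebra (T ⋙ T)) ⟶ A :=
    ⟨sqrtStr h, by
      simp only [sqrtStr, Functor.comp_map, Functor.map_comp]
      rw [hT, Category.assoc]⟩
  exact congrArg Hom.f (h.hom_ext (h.to _ ≫ γ) (𝟙 A))

theorem sqrtStr_comp_sqrtStrInv : sqrtStr h ≫ sqrtStrInv h = 𝟙 (T.obj A.a) := by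
  calc sqrtStr h ≫ sqrtStrInv h = T.map (sqrtStrInv h ≫ sqrtStr h) := by
        rw [sqrtStr, Category.assoc, ← map_map_sqrtStrInv_comp]
        simp only [Functor.map_comp]
    _ = 𝟙 (T.obj A.a) := by rw [sqrtStrInv_comp_sqrtStr, T.map_id]

instance : IsIso (sqrtStr h) := ⟨_, sqrtStr_comp_sqrtStrInv h, sqrtStrInv_comp_sqrtStr h⟩

theorem map_sqrtStr_comp_sqrtStr : T.map (sqrtStr h) ≫ sqrtStr h = A.str := by
  calc T.map (sqrtStr h) ≫ sqrtStr h = T.map (sqrtStr h ≫ sqrtStrInv h) ≫ A.str := by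
        rw [T.map_comp_assoc]
        rfl
    _ = A.str := by rw [sqrtStr_comp_sqrtStrInv, T.map_id, Category.id_comp]

def sqrt : Algebra T := ⟨A.a, sqrtStr h⟩

instance : IsIso (sqrt h).str := inferInstanceAs (IsIso (sqrtStr h))

def sqrtSquareIso : (sqrt h).square ≅ A :=
  isoMk (Iso.refl _) (by simp [square, sqrt, map_sqrtStr_comp_sqrtStr])

end Initial

end CategoryTheory.Endofunctor.Algebra

end

open CategoryTheory.Endofunctor.Algebra in
/-- Freyd's squaring lemma: if `T ⋙ T` has some bifree algebra and `(V, a)` is a bifree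
`T`-algebra, then `(V, T.map a ≫ a)` is a bifree `T ⋙ T`-algebra. -/
theorem bifree_comp_self_of_bifree
    {C : Type*} [Category C] (T : C ⥤ C)
    (hTT : ∃ (W : C) (b : (T ⋙ T).obj W ⟶ W), IsBifreeAlgebra (T ⋙ T) W b)
    (V : C) (a : T.obj V ⟶ V) (h : IsBifreeAlgebra T V a) :
    IsBifreeAlgebra (T ⋙ T) V (T.map a ≫ a) := by
  obtain ⟨W, b, ⟨hW⟩, hb, ⟨hW'⟩⟩ := hTT
  obtain ⟨⟨hV⟩, ha, ⟨hV'⟩⟩ := h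
  let A : Endofunctor.Algebra T := ⟨V, a⟩
  let B : Endofunctor.Algebra (T ⋙ T) := ⟨W, b⟩
  have e : A.square ≅ B :=
    (squareFunctor T).mapIso
        (isoOfIsInitialSquare hV hV' (hW.ofIso (Initial.sqrtSquareIso hW).symm)) ≪≫
      Initial.sqrtSquareIso hW
  exact ⟨⟨hW.ofIso e.symm⟩, inferInstance, ⟨hW'.ofIso (invCoalgebraIso e.symm)⟩⟩
end

section
/- Let (T, ε, δ) be a comonad on a category C and let (V, a : T.obj V ⟶ V) be a bifree algebra for the underlying endofunctor of T. Then for every object W of C there exists a unique morphism t : T.obj W ⟶ V satisfying t = δ_W ≫ T.map t ≫ a. (Equivalently: in the co-Kleisli category of T, the morphism a, viewed as an endomorphism of V, has a unique fixed point t : W ⟶ V, namely a unique t with (co-Kleisli composite of t followed by a) = t.) -/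
/-!
Since `a` is invertible, `t = δ_W ≫ T.map t ≫ a` says exactly that `t` is a morphism of
`T`-coalgebras from `(T W, δ_W)` to `(V, a⁻¹)`; the latter is terminal, so there is exactly one.
-/

open CategoryTheory CategoryTheory.Limits

namespace CategoryTheory.Endofunctor.Coalgebra

variable {C : Type*} [Category C] {F : C ⥤ C} {V : C} (a : F.obj V ⟶ V) [IsIso a]

theorem eq_str_comp_map_comp_iff (X : Coalgebra F) (t : X.V ⟶ V) :
    t = X.str ≫ F.map t ≫ a ↔ X.str ≫ F.map t = t ≫ inv a := by
  rw [← Category.assoc, IsIso.eq_comp_inv, eq_comm]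

theorem existsUnique_eq_str_comp_map_comp (hV : IsTerminal (Coalgebra.mk V (inv a)))
    (X : Coalgebra F) : ∃! t : X.V ⟶ V, t = X.str ≫ F.map t ≫ a := by
  refine ⟨(hV.from X).f, (eq_str_comp_map_comp_iff a X _).mpr (hV.from X).h, fun t ht => ?_⟩
  let tHom : X ⟶ Coalgebra.mk V (inv a) := ⟨t, (eq_str_comp_map_comp_iff a X t).mp ht⟩
  exact congrArg Hom.f (hV.hom_ext tHom (hV.from X))

end CategoryTheory.Endofunctor.Coalgebra

/-- If `(V, a)` is a bifree algebra for the underlying endofunctor of a comonad `T`, then for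
every object `W` there is a unique morphism `t : T.obj W ⟶ V` with
`t = δ_W ≫ T.map t ≫ a`, i.e. `a` has a unique fixed point in the co-Kleisli category. -/
theorem bifree_unique_fixedPoint
    {C : Type*} [Category C] (T : Comonad C)
    (V : C) (a : (T : C ⥤ C).obj V ⟶ V)
    (h : IsBifreeAlgebra (T : C ⥤ C) V a) (W : C) :
    ∃! t : (T : C ⥤ C).obj W ⟶ V, t = T.δ.app W ≫ (T : C ⥤ C).map t ≫ a := by
  obtain ⟨-, hiso, ⟨hterm⟩⟩ := h
  exact Endofunctor.Coalgebra.existsUnique_eq_str_comp_map_comp a hterm ⟨_, T.δ.app W⟩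
end

section
/- Let (T, ε, δ) be a comonad on a category C, let (V, a : T.obj V ⟶ V) be a bifree algebra for the underlying endofunctor of T, let W be an object of C, and let t : T.obj W ⟶ V be the unique morphism satisfying t = δ_W ≫ T.map t ≫ a. Then for every object A, every morphism f : T.obj A ⟶ A, and every morphism u : V ⟶ A satisfying a ≫ u = T.map u ≫ f (i.e. u is a morphism of T-algebras from (V, a) to (A, f)), the composite t ≫ u : T.obj W ⟶ A satisfies δ_W ≫ T.map (t ≫ u) ≫ f = t ≫ u; in other words, t ≫ u is a fixed point of f in the co-Kleisli category of T. -/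
open CategoryTheory CategoryTheory.Limits

theorem fixedPoint_comp_algebraHom_general
    {C : Type*} [Category C] (T : Comonad C)
    (V : C) (a : (T : C ⥤ C).obj V ⟶ V)
    (W : C) (t : (T : C ⥤ C).obj W ⟶ V)
    (ht : t = T.δ.app W ≫ (T : C ⥤ C).map t ≫ a)
    (A : C) (f : (T : C ⥤ C).obj A ⟶ A) (u : V ⟶ A)
    (hu : a ≫ u = (T : C ⥤ C).map u ≫ f) :
    T.δ.app W ≫ (T : C ⥤ C).map (t ≫ u) ≫ f = t ≫ u :=
  calc _ = (T.δ.app W ≫ (T : C ⥤ C).map t ≫ a) ≫ u := by simp [hu]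
    _ = t ≫ u := by rw [← ht]

/-- For a comonad `T`, a bifree algebra `(V, a)` of its underlying endofunctor, and the
(unique) fixed point `t : T.obj W ⟶ V` of `a` in the co-Kleisli category, composing `t` with
any algebra morphism `u : (V, a) ⟶ (A, f)` yields a fixed point of `f` in the co-Kleisli
category. -/
theorem fixedPoint_comp_algebraHom
    {C : Type*} [Category C] (T : Comonad C)
    (V : C) (a : (T : C ⥤ C).obj V ⟶ V)
    (h : IsBifreeAlgebra (T : C ⥤ C) V a)
    (W : C) (t : (T : C ⥤ C).obj W ⟶ V)
    (ht : t = T.δ.app W ≫ (T : C ⥤ C).map t ≫ a)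
    (A : C) (f : (T : C ⥤ C).obj A ⟶ A) (u : V ⟶ A)
    (hu : a ≫ u = (T : C ⥤ C).map u ≫ f) :
    T.δ.app W ≫ (T : C ⥤ C).map (t ≫ u) ≫ f = t ≫ u :=
  fixedPoint_comp_algebraHom_general T V a W t ht A f u hu
end

section
/- Let α and β be ω-complete partial orders each with a least element ⊥, and let f : α →𝒄 β and g : β →𝒄 α be ω-continuous maps. Then ωSup ⟨n ↦ (f ∘ g)^[n] ⊥⟩ = f (ωSup ⟨n ↦ (g ∘ f)^[n] ⊥⟩), i.e. the Kleene least fixed point of the composite f ∘ g : β →𝒄 β equals the image under f of the Kleene least fixed point of g ∘ f : α →𝒄 α. -/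
/-!
The iterates of `f ∘ g` starting at `f ⊥` interleave with the Kleene chain of `f ∘ g`:
`(f ∘ g)^[n] ⊥ ≤ (f ∘ g)^[n] (f ⊥) ≤ (f ∘ g)^[n + 1] ⊥`, so both chains have the same supremum.
Since `f ∘ (g ∘ f)^[n] = (f ∘ g)^[n] ∘ f`, the middle chain is the image under `f` of the
Kleene chain of `g ∘ f`, whose supremum is `f` applied to the fixed point of `g ∘ f` by continuity.
-/

open OmegaCompletePartialOrder

/-- The Kleene chain `⊥ ≤ f ⊥ ≤ f (f ⊥) ≤ ⋯` of iterates of `f` starting at `⊥`. -/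
def kleeneChain {α : Type*} [OmegaCompletePartialOrder α] [OrderBot α]
    (f : α →𝒄 α) : Chain α where
  toFun n := f^[n] ⊥
  monotone' := monotone_nat_of_le_succ fun n => by
    rw [Function.iterate_succ_apply]
    exact (f.toOrderHom.monotone.iterate n) bot_le

theorem ωSup_iterate_eq_ωSup_kleeneChain {α : Type*} [OmegaCompletePartialOrder α]
    [OrderBot α] (h : α →𝒄 α) {x : α} (hx : x ≤ h ⊥) {c : Chain α}
    (hc : ∀ n, c n = h^[n] x) : ωSup c = ωSup (kleeneChain h) := by
  have hmono : ∀ n, Monotone h^[n] := fun n => h.monotone.iterate n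
  refine le_antisymm (ωSup_le_ωSup_of_le fun n => ⟨n + 1, ?_⟩)
    (ωSup_le_ωSup_of_le fun n => ⟨n, ?_⟩)
  · calc c n = h^[n] x := hc n
      _ ≤ h^[n] (h ⊥) := hmono n hx
      _ = kleeneChain h (n + 1) := (Function.iterate_succ_apply h n ⊥).symm
  · exact (hmono n bot_le).trans_eq (hc n).symm

/-- Dinaturality for the Kleene fixed point: the least fixed point of `f ∘ g` is the image
under `f` of the least fixed point of `g ∘ f`. -/
theorem kleeneFix_dinatural {α β : Type*}
    [OmegaCompletePartialOrder α] [OrderBot α]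
    [OmegaCompletePartialOrder β] [OrderBot β]
    (f : α →𝒄 β) (g : β →𝒄 α) :
    ωSup (kleeneChain (f.comp g)) = f (ωSup (kleeneChain (g.comp f))) := by
  rw [f.continuous]
  refine (ωSup_iterate_eq_ωSup_kleeneChain (f.comp g) (f.monotone bot_le) fun n => ?_).symm
  exact Function.Semiconj.iterate_right (f := f) (fun _ => rfl) n ⊥
end

section
/- Let C and D be categories and F, G, H : Cᵒᵖ × C ⥤ D functors. Let γ be a strong dinatural transformation from F to G and δ a strong dinatural transformation from G to H. Then the family of composites (γ_c ≫ δ_c), indexed by the objects c of C, is a strong dinatural transformation from F to H; hence strong dinatural transformations between functors Cᵒᵖ × C ⥤ D compose. -/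
open CategoryTheory

/-- A strong dinatural transformation between functors `Cᵒᵖ × C ⥤ D`: a family of components
`γ c : F.obj (c, c) ⟶ G.obj (c, c)` such that every wedge over `F` is carried to a
commuting hexagon. -/
def IsStrongDinatural {C : Type*} {D : Type*} [Category C] [Category D]
    (F G : Cᵒᵖ × C ⥤ D)
    (γ : ∀ c : C, F.obj (Opposite.op c, c) ⟶ G.obj (Opposite.op c, c)) : Prop :=
  ∀ {c d : C} (f : c ⟶ d) (Q : D)
    (qc : Q ⟶ F.obj (Opposite.op c, c)) (qd : Q ⟶ F.obj (Opposite.op d, d)),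
    qc ≫ F.map ((𝟙 (Opposite.op c), f) :
        (Opposite.op c, c) ⟶ (Opposite.op c, d)) =
      qd ≫ F.map ((f.op, 𝟙 d) : (Opposite.op d, d) ⟶ (Opposite.op c, d)) →
    qc ≫ γ c ≫ G.map ((𝟙 (Opposite.op c), f) :
        (Opposite.op c, c) ⟶ (Opposite.op c, d)) =
      qd ≫ γ d ≫ G.map ((f.op, 𝟙 d) : (Opposite.op d, d) ⟶ (Opposite.op c, d))

/-- Strong dinatural transformations compose. -/
theorem IsStrongDinatural.comp {C : Type*} {D : Type*} [Category C] [Category D]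
    (F G H : Cᵒᵖ × C ⥤ D)
    (γ : ∀ c : C, F.obj (Opposite.op c, c) ⟶ G.obj (Opposite.op c, c))
    (δ : ∀ c : C, G.obj (Opposite.op c, c) ⟶ H.obj (Opposite.op c, c))
    (hγ : IsStrongDinatural F G γ) (hδ : IsStrongDinatural G H δ) :
    IsStrongDinatural F H (fun c => γ c ≫ δ c) := by
  intro c d f Q qc qd hF
  have hG := hγ f Q qc qd hF
  rw [← Category.assoc, ← Category.assoc] at hG
  simpa only [Category.assoc] using hδ f Q (qc ≫ γ c) (qd ≫ γ d) hG
end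

section
/- Let C and D be categories with terminal objects and J : C → D an identity-on-objects functor preserving the terminal object ⊤ of D. A fixpoint operator (-)* on D is uniform with respect to J if and only if the family of functions (-)*_A : Hom_D(J A, J A) → Hom_D(⊤, J A), indexed by objects A of C, is a strong dinatural transformation from the functor (A, B) ↦ Hom_D(J A, J B) to the functor (A, B) ↦ Hom_D(⊤, J B) (both functors Cᵒᵖ × C ⥤ Type, with first variable acting by precomposition with J of morphisms of C and second variable by postcomposition). -/
open CategoryTheory CategoryTheory.Limits

variable {C : Type*} {D : Type*} [Category C] [Category D]

/-- The functor `Cᵒᵖ × C ⥤ Type` sending `(A, B)` to `Hom_D(J A, J B)`. -/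
def homJJ (J : C ⥤ D) : Cᵒᵖ × C ⥤ Type _ :=
  (J.op.prod J) ⋙ Functor.hom D

/-- The functor `Cᵒᵖ × C ⥤ Type` sending `(A, B)` to `Hom_D(⊤, J B)`. -/
noncomputable def homTopJ [HasTerminal D] (J : C ⥤ D) : Cᵒᵖ × C ⥤ Type _ :=
  (((Functor.const Cᵒᵖ).obj (Opposite.op (⊤_ D))).prod J) ⋙ Functor.hom D

/-!
Both conditions are the same statement read through the hom-functors. Strong dinaturality of
`Type`-valued functors may be tested on elements, i.e. on wedges out of a one-point type. A
wedge of `(A, B) ↦ Hom_D(J A, J B)` at `s : A ⟶ B` is a pair `f, g` with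
`f ≫ J s = J s ≫ g`, and the corresponding hexagon of `(A, B) ↦ Hom_D(⊤, J B)` says
`f* ≫ J s = g*`.
-/

open Opposite

universe w

theorem isStrongDinatural_types_iff {F G : Cᵒᵖ × C ⥤ Type w}
    (γ : ∀ c : C, F.obj (op c, c) ⟶ G.obj (op c, c)) :
    IsStrongDinatural F G γ ↔
      ∀ {c d : C} (f : c ⟶ d) (x : F.obj (op c, c)) (y : F.obj (op d, d)),
        F.map ((𝟙 (op c), f) : (op c, c) ⟶ (op c, d)) x =
            F.map ((f.op, 𝟙 d) : (op d, d) ⟶ (op c, d)) y →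
          G.map ((𝟙 (op c), f) : (op c, c) ⟶ (op c, d)) (γ c x) =
            G.map ((f.op, 𝟙 d) : (op d, d) ⟶ (op c, d)) (γ d y) := by
  refine ⟨fun hdinat c d f x y hxy => ?_, fun hpointwise c d f Q qc qd hq => ?_⟩
  · have hexagon := hdinat f PUnit (TypeCat.ofHom fun _ => x) (TypeCat.ofHom fun _ => y)
      (by ext; exact hxy)
    exact types_congr_hom hexagon PUnit.unit
  · ext q
    exact hpointwise f (qc q) (qd q) (types_congr_hom hq q)

section

variable (J : C ⥤ D) {A B : C} (s : A ⟶ B)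

theorem homJJ_map_eq_map_iff (f : J.obj A ⟶ J.obj A) (g : J.obj B ⟶ J.obj B) :
    (homJJ J).map ((𝟙 (op A), s) : (op A, A) ⟶ (op A, B)) f =
        (homJJ J).map ((s.op, 𝟙 B) : (op B, B) ⟶ (op A, B)) g ↔
      f ≫ J.map s = J.map s ≫ g := by
  show J.map (𝟙 A) ≫ f ≫ J.map s = J.map s ≫ g ≫ J.map (𝟙 B) ↔ _
  simp only [J.map_id, Category.id_comp, Category.comp_id]

theorem homTopJ_map_eq_map_iff [HasTerminal D] (a : ⊤_ D ⟶ J.obj A) (b : ⊤_ D ⟶ J.obj B) :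
    (homTopJ J).map ((𝟙 (op A), s) : (op A, A) ⟶ (op A, B)) a =
        (homTopJ J).map ((s.op, 𝟙 B) : (op B, B) ⟶ (op A, B)) b ↔
      a ≫ J.map s = b := by
  show 𝟙 _ ≫ a ≫ J.map s = 𝟙 _ ≫ b ≫ J.map (𝟙 B) ↔ _
  simp only [J.map_id, Category.id_comp, Category.comp_id]

end

theorem uniform_iff_strongDinatural_general
    [HasTerminal D]
    (J : C ⥤ D)
    (fix : ∀ X : D, (X ⟶ X) → ((⊤_ D) ⟶ X)) :
    (∀ {A B : C} (s : A ⟶ B) (f : J.obj A ⟶ J.obj A) (g : J.obj B ⟶ J.obj B),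
        f ≫ J.map s = J.map s ≫ g → fix (J.obj A) f ≫ J.map s = fix (J.obj B) g) ↔
    IsStrongDinatural (homJJ J) (homTopJ J) (fun A => TypeCat.ofHom (fix (J.obj A))) := by
  rw [isStrongDinatural_types_iff]
  refine ⟨fun huniform A B s f g hwedge => ?_, fun hdinat A B s f g hfg => ?_⟩
  · exact (homTopJ_map_eq_map_iff J s _ _).2
      (huniform s f g ((homJJ_map_eq_map_iff J s f g).1 hwedge))
  · exact (homTopJ_map_eq_map_iff J s _ _).1
      (hdinat s f g ((homJJ_map_eq_map_iff J s f g).2 hfg))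

/-- Mulry's characterization: a fixpoint operator on `D` is uniform with respect to an
identity-on-objects (here: bijective-on-objects), terminal-object-preserving functor
`J : C ⥤ D` if and only if its components form a strong dinatural transformation from
`(A, B) ↦ Hom_D(J A, J B)` to `(A, B) ↦ Hom_D(⊤, J B)`. -/
theorem uniform_iff_strongDinatural
    [HasTerminal C] [HasTerminal D]
    (J : C ⥤ D)
    (hJobj : Function.Bijective J.obj)
    (hJterm : IsTerminal (J.obj (⊤_ C)))
    (fix : ∀ X : D, (X ⟶ X) → ((⊤_ D) ⟶ X))
    (hfix : ∀ (X : D) (f : X ⟶ X), fix X f ≫ f = fix X f) :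
    (∀ {A B : C} (s : A ⟶ B) (f : J.obj A ⟶ J.obj A) (g : J.obj B ⟶ J.obj B),
        f ≫ J.map s = J.map s ≫ g → fix (J.obj A) f ≫ J.map s = fix (J.obj B) g) ↔
    IsStrongDinatural (homJJ J) (homTopJ J) (fun A => TypeCat.ofHom (fix (J.obj A))) :=
  uniform_iff_strongDinatural_general J fix
end
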